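/- Let A ∈ ℝ^{m×n} be nonzero, let A^k̃ be the row of A of largest Euclidean norm, let w = (A^k̃)ᵀ/‖A^k̃‖, x = Aw, and x⁰ = x_r/‖x_r‖ where x_r is the r-truncation of x (1 ≤ r ≤ m, assuming x_r ≠ 0). Then ‖Aᵀx⁰‖ ≥ √(r/m²)·‖A‖_F. -/

import Mathlib

/-!
Write `x₀ = x_r / ‖x_r‖`. Since `x_r` agrees with `x` on its support, `⟨x₀, x⟩ = ‖x_r‖`, and
`⟨x₀, x⟩ = ⟨Aᵀx₀, w⟩ ≤ ‖Aᵀx₀‖` by Cauchy–Schwarz, `w` having norm at most one. On the other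
hand the `r` largest squares of `x` carry at least the fraction `r/m` of `‖x‖²`, and
`‖x‖ ≥ x_k̃ = ‖A^k̃‖ ≥ ‖A‖_F / √m`. Hence `‖x_r‖² ≥ (r/m) ‖x‖² ≥ (r/m²) ‖A‖_F²`.
-/

open Finset

noncomputable def enorm2 {ι : Type*} [Fintype ι] (x : ι → ℝ) : ℝ :=
  Real.sqrt (∑ i, x i ^ 2)

def dot {ι : Type*} [Fintype ι] (x y : ι → ℝ) : ℝ := ∑ i, x i * y i

noncomputable def l0 {ι : Type*} [Fintype ι] (x : ι → ℝ) : ℕ :=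
  (Finset.univ.filter fun i => x i ≠ 0).card

def IsTrunc {ι : Type*} [Fintype ι] [DecidableEq ι] (a : ι → ℝ) (r : ℕ) (ar : ι → ℝ) : Prop :=
  ∃ S : Finset ι, S.card = r ∧ (∀ i ∈ S, ar i = a i) ∧ (∀ i ∉ S, ar i = 0) ∧
    ∀ i ∈ S, ∀ j ∉ S, |a j| ≤ |a i|

noncomputable def lmax {m n' : Type*} [Fintype m] [Fintype n'] (A : Matrix m n' ℝ) : ℝ :=
  sSup {c | ∃ x : n' → ℝ, enorm2 x = 1 ∧ c = enorm2 (A.mulVec x)}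

noncomputable def fnorm {m n' : Type*} [Fintype m] [Fintype n'] (A : Matrix m n' ℝ) : ℝ :=
  Real.sqrt (∑ i, ∑ j, A i j ^ 2)

def tri {n1 n2 n3 : ℕ} (A : Fin n1 → Fin n2 → Fin n3 → ℝ)
    (x : Fin n1 → ℝ) (y : Fin n2 → ℝ) (z : Fin n3 → ℝ) : ℝ :=
  ∑ i, ∑ j, ∑ k, A i j k * x i * y j * z k

def mlin {d : ℕ} {n : Fin d → ℕ} (A : (∀ j, Fin (n j)) → ℝ)
    (x : ∀ j, Fin (n j) → ℝ) : ℝ :=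
  ∑ i, A i * ∏ j, x j (i j)

open Matrix

theorem Finset.card_nsmul_sum_le_card_nsmul_sum {ι M : Type*} [AddCommMonoid M] [PartialOrder M]
    [IsOrderedAddMonoid M] {s t : Finset ι} {f : ι → M} (h : ∀ i ∈ s, ∀ j ∈ t, f j ≤ f i) :
    #s • ∑ j ∈ t, f j ≤ #t • ∑ i ∈ s, f i :=
  calc #s • ∑ j ∈ t, f j = ∑ _i ∈ s, ∑ j ∈ t, f j := (sum_const _).symm
    _ ≤ ∑ i ∈ s, ∑ _j ∈ t, f i := sum_le_sum fun i hi => sum_le_sum fun j hj => h i hi j hj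
    _ = #t • ∑ i ∈ s, f i := by simp only [sum_const, smul_sum]

section Euclidean

variable {ι : Type*} [Fintype ι]

lemma enorm2_nonneg (x : ι → ℝ) : 0 ≤ enorm2 x := Real.sqrt_nonneg _

lemma enorm2_sq (x : ι → ℝ) : enorm2 x ^ 2 = ∑ i, x i ^ 2 :=
  Real.sq_sqrt (sum_nonneg fun _ _ => sq_nonneg _)

lemma dotProduct_self_eq_enorm2_sq (x : ι → ℝ) : x ⬝ᵥ x = enorm2 x ^ 2 := by
  rw [enorm2_sq]
  simp only [dotProduct, sq]

lemma sq_apply_le_enorm2_sq (x : ι → ℝ) (i : ι) : x i ^ 2 ≤ enorm2 x ^ 2 := by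
  rw [enorm2_sq]
  exact single_le_sum (f := fun i => x i ^ 2) (fun _ _ => sq_nonneg _) (mem_univ i)

lemma dotProduct_le_enorm2_mul_enorm2 (x y : ι → ℝ) : x ⬝ᵥ y ≤ enorm2 x * enorm2 y :=
  Real.sum_mul_le_sqrt_mul_sqrt _ x y

-- `unitVec 0 = 0`, since `a / 0 = 0`.
noncomputable def unitVec (x : ι → ℝ) : ι → ℝ := fun i => x i / enorm2 x

lemma enorm2_unitVec_le_one (x : ι → ℝ) : enorm2 (unitVec x) ≤ 1 := by
  have h : enorm2 (unitVec x) ^ 2 ≤ 1 := by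
    rw [enorm2_sq]
    simp only [unitVec, div_pow]
    rw [← sum_div, ← enorm2_sq]
    exact div_self_le_one _
  exact (sq_le_one_iff₀ (enorm2_nonneg _)).1 h

lemma unitVec_dotProduct (x y : ι → ℝ) : unitVec x ⬝ᵥ y = x ⬝ᵥ y / enorm2 x := by
  simp only [unitVec, dotProduct, div_mul_eq_mul_div, sum_div]

end Euclidean

section Truncation

variable {ι : Type*} [Fintype ι] [DecidableEq ι] {a ar : ι → ℝ} {r : ℕ}

lemma IsTrunc.dotProduct_eq (h : IsTrunc a r ar) : ar ⬝ᵥ a = enorm2 ar ^ 2 := by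
  obtain ⟨S, -, hon, hoff, -⟩ := h
  rw [← dotProduct_self_eq_enorm2_sq]
  refine sum_congr rfl fun i _ => ?_
  by_cases hi : i ∈ S
  · rw [hon i hi]
  · rw [hoff i hi, zero_mul, zero_mul]

lemma IsTrunc.unitVec_dotProduct (h : IsTrunc a r ar) : unitVec ar ⬝ᵥ a = enorm2 ar := by
  rw [_root_.unitVec_dotProduct, h.dotProduct_eq, sq, mul_self_div_self]

lemma IsTrunc.card_mul_enorm2_sq_le (h : IsTrunc a r ar) :
    r * enorm2 a ^ 2 ≤ Fintype.card ι * enorm2 ar ^ 2 := by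
  obtain ⟨S, hcard, hon, hoff, hbig⟩ := h
  have hsum : ∑ i, ar i ^ 2 = ∑ i ∈ S, a i ^ 2 := by
    rw [← sum_subset (subset_univ S) fun i _ hi => by rw [hoff i hi, sq, zero_mul]]
    exact sum_congr rfl fun i hi => by rw [hon i hi]
  have havg : (r : ℝ) * ∑ j ∈ Sᶜ, a j ^ 2 ≤ #Sᶜ * ∑ i ∈ S, a i ^ 2 := by
    simpa only [nsmul_eq_mul, hcard] using card_nsmul_sum_le_card_nsmul_sum
      (f := fun i => a i ^ 2) fun i hi j hj => sq_le_sq.2 (hbig i hi j (mem_compl.1 hj))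
  have hcompl : (#Sᶜ : ℝ) + r = Fintype.card ι := by
    rw [← hcard]
    exact_mod_cast card_compl_add_card S
  rw [enorm2_sq, enorm2_sq, hsum, ← sum_add_sum_compl S, ← hcompl]
  linarith

end Truncation

section Rows

variable {m n : Type*} [Fintype n]

lemma mulVec_unitVec_row (A : Matrix m n ℝ) (k : m) : (A *ᵥ unitVec (A k)) k = enorm2 (A k) := by
  have h := unitVec_dotProduct (A k) (A k)
  rwa [dotProduct_self_eq_enorm2_sq, sq, mul_self_div_self, dotProduct_comm] at h

variable [Fintype m]

lemma fnorm_nonneg (A : Matrix m n ℝ) : 0 ≤ fnorm A := Real.sqrt_nonneg _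

lemma fnorm_sq (A : Matrix m n ℝ) : fnorm A ^ 2 = ∑ i, enorm2 (A i) ^ 2 := by
  simp only [fnorm, enorm2_sq]
  exact Real.sq_sqrt (sum_nonneg fun _ _ => sum_nonneg fun _ _ => sq_nonneg _)

lemma fnorm_sq_le_card_mul_sq (A : Matrix m n ℝ) {c : ℝ} (h : ∀ i, enorm2 (A i) ≤ c) :
    fnorm A ^ 2 ≤ Fintype.card m * c ^ 2 :=
  calc fnorm A ^ 2 ≤ ∑ _i : m, c ^ 2 := by
        rw [fnorm_sq]
        exact sum_le_sum fun i _ => pow_le_pow_left₀ (enorm2_nonneg _) (h i) 2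
    _ = Fintype.card m * c ^ 2 := by rw [sum_const, card_univ, nsmul_eq_mul]

end Rows

theorem stmt_15_general {m n : ℕ} (A : Matrix (Fin m) (Fin n) ℝ)
    (kt : Fin m) (hkt : ∀ k, enorm2 (A k) ≤ enorm2 (A kt))
    (w : Fin n → ℝ) (hw : w = fun j => A kt j / enorm2 (A kt))
    (x : Fin m → ℝ) (hx : x = A.mulVec w)
    (r : ℕ)
    (xr : Fin m → ℝ) (htr : IsTrunc x r xr)
    (x0 : Fin m → ℝ) (hx0 : x0 = fun i => xr i / enorm2 xr) :
    enorm2 (A.transpose.mulVec x0) ≥ Real.sqrt ((r : ℝ) / (m : ℝ) ^ 2) * fnorm A := by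
  have hm : (0 : ℝ) < m := by exact_mod_cast kt.pos
  have hxkt : x kt = enorm2 (A kt) := by
    rw [hx, hw]
    exact mulVec_unitVec_row A kt
  have hF : fnorm A ^ 2 ≤ m * enorm2 x ^ 2 := by
    have h := fnorm_sq_le_card_mul_sq A hkt
    rw [Fintype.card_fin] at h
    exact h.trans (mul_le_mul_of_nonneg_left (hxkt ▸ sq_apply_le_enorm2_sq x kt) hm.le)
  have htrunc : r * enorm2 x ^ 2 ≤ m * enorm2 xr ^ 2 := by
    simpa using htr.card_mul_enorm2_sq_le
  have hproj : enorm2 xr ≤ enorm2 (Aᵀ *ᵥ x0) :=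
    calc enorm2 xr = x0 ⬝ᵥ x := by rw [hx0]; exact htr.unitVec_dotProduct.symm
      _ = Aᵀ *ᵥ x0 ⬝ᵥ w := by rw [hx, dotProduct_mulVec, mulVec_transpose]
      _ ≤ enorm2 (Aᵀ *ᵥ x0) * enorm2 w := dotProduct_le_enorm2_mul_enorm2 _ _
      _ ≤ enorm2 (Aᵀ *ᵥ x0) :=
        mul_le_of_le_one_right (enorm2_nonneg _) (by rw [hw]; exact enorm2_unitVec_le_one (A kt))
  have hkey : r / m ^ 2 * fnorm A ^ 2 ≤ enorm2 xr ^ 2 := by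
    rw [div_mul_eq_mul_div, div_le_iff₀ (by positivity)]
    calc r * fnorm A ^ 2 ≤ m * (r * enorm2 x ^ 2) :=
          (mul_le_mul_of_nonneg_left hF r.cast_nonneg).trans_eq (by ring)
      _ ≤ m * (m * enorm2 xr ^ 2) := by gcongr
      _ = enorm2 xr ^ 2 * m ^ 2 := by ring
  calc Real.sqrt (r / m ^ 2) * fnorm A = Real.sqrt (r / m ^ 2 * fnorm A ^ 2) := by
        rw [Real.sqrt_mul (by positivity), Real.sqrt_sq (fnorm_nonneg A)]
    _ ≤ enorm2 xr := (Real.sqrt_le_sqrt hkey).trans_eq (Real.sqrt_sq (enorm2_nonneg _))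
    _ ≤ _ := hproj

/-- Lemma 3.3: SVD-free estimate. With A^k̃ the largest-norm row,
w = (A^k̃)ᵀ/‖A^k̃‖, x = Aw and x⁰ the normalized r-truncation of x,
one has ‖Aᵀx⁰‖ ≥ √(r/m²)·‖A‖_F. -/
theorem stmt_15 {m n : ℕ} (A : Matrix (Fin m) (Fin n) ℝ) (hA : A ≠ 0)
    (kt : Fin m) (hkt : ∀ k, enorm2 (A k) ≤ enorm2 (A kt))
    (w : Fin n → ℝ) (hw : w = fun j => A kt j / enorm2 (A kt))
    (x : Fin m → ℝ) (hx : x = A.mulVec w)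
    (r : ℕ) (hr1 : 1 ≤ r) (hrm : r ≤ m)
    (xr : Fin m → ℝ) (htr : IsTrunc x r xr) (hxr : xr ≠ 0)
    (x0 : Fin m → ℝ) (hx0 : x0 = fun i => xr i / enorm2 xr) :
    enorm2 (A.transpose.mulVec x0) ≥ Real.sqrt ((r : ℝ) / (m : ℝ) ^ 2) * fnorm A :=
  stmt_15_general A kt hkt w hw x hx r xr htr x0 hx0
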